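/- Let ρ1, ρ2 be density matrices on a finite-dimensional complex inner product space, with a priori probabilities p1, p2 ≥ 0, p1 + p2 = 1. Let H∩ = support(ρ1) ∩ support(ρ2), let Π' be the orthogonal projection onto the orthogonal complement of H∩, assume N_i = Tr(ρ_i Π') > 0 for i = 1, 2, set ρ'_i = Π' ρ_i Π' / N_i, N = N1 p1 + N2 p2 and p'_i = N_i p_i / N. Then for any USD POVM (F1, F2, F?) for (ρ1, ρ2), its failure probability satisfies Q = (1 − N1) p1 + (1 − N2) p2 + N·Q', where Q' = p'1 Tr(ρ'1 F'?) + p'2 Tr(ρ'2 F'?) and F'? = Π' F? Π'. -/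

import Mathlib

open Matrix ComplexOrder

noncomputable section

abbrev Mat (n : ℕ) := Matrix (Fin n) (Fin n) ℂ

/-- The support (range) of a matrix, viewed as an operator on Euclidean space. -/
def MatSupport {n : ℕ} (A : Mat n) : Submodule ℂ (EuclideanSpace ℂ (Fin n)) :=
  LinearMap.range (Matrix.toEuclideanLin A)

/-- The matrix of the orthogonal projection onto a subspace of Euclidean space. -/
def projMat {n : ℕ} (K : Submodule ℂ (EuclideanSpace ℂ (Fin n))) : Mat n :=
  Matrix.toEuclideanLin.symm (K.subtype ∘ₗ (K.orthogonalProjection).toLinearMap)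

/-- A density matrix: positive semidefinite (hence Hermitian) with trace one. -/
def IsDensity {n : ℕ} (ρ : Mat n) : Prop := ρ.PosSemidef ∧ ρ.trace = 1

/-- A USD POVM for the pair (ρ1, ρ2). -/
def IsUSD {n : ℕ} (ρ1 ρ2 F1 F2 Fq : Mat n) : Prop :=
  F1.PosSemidef ∧ F2.PosSemidef ∧ Fq.PosSemidef ∧ F1 + F2 + Fq = 1 ∧
  (ρ1 * F2).trace = 0 ∧ (ρ2 * F1).trace = 0

/-- Failure probability of a USD POVM with inconclusive element `Fq`. -/
def failQ {n : ℕ} (p1 p2 : ℝ) (ρ1 ρ2 Fq : Mat n) : ℝ :=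
  p1 * ((ρ1 * Fq).trace).re + p2 * ((ρ2 * Fq).trace).re


lemma euclid_mul {n : ℕ} (A B : Mat n) :
    Matrix.toEuclideanLin (A * B) = (Matrix.toEuclideanLin A) ∘ₗ (Matrix.toEuclideanLin B) := by
  ext x
  simp [Matrix.toEuclideanLin_apply, Matrix.mulVec_mulVec]

lemma projMat_toLin {n : ℕ} (K : Submodule ℂ (EuclideanSpace ℂ (Fin n))) :
    Matrix.toEuclideanLin (projMat K) = K.subtype ∘ₗ (K.orthogonalProjection).toLinearMap := by
  simp [projMat]

lemma projMat_apply {n : ℕ} (K : Submodule ℂ (EuclideanSpace ℂ (Fin n)))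
    (x : EuclideanSpace ℂ (Fin n)) :
    Matrix.toEuclideanLin (projMat K) x = (K.orthogonalProjection x : EuclideanSpace ℂ (Fin n)) := by
  rw [projMat_toLin]; rfl

lemma projMat_sq {n : ℕ} (K : Submodule ℂ (EuclideanSpace ℂ (Fin n))) :
    projMat K * projMat K = projMat K := by
  apply Matrix.toEuclideanLin.injective
  rw [euclid_mul]
  apply LinearMap.ext
  intro x
  simp only [LinearMap.comp_apply, projMat_apply]
  rw [Submodule.orthogonalProjectionOnto_mem_subspace_eq_self ⟨_, SetLike.coe_mem _⟩]

lemma projMat_herm {n : ℕ} (K : Submodule ℂ (EuclideanSpace ℂ (Fin n))) :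
    (projMat K)ᴴ = projMat K := by
  apply Matrix.toEuclideanLin.injective
  rw [Matrix.toEuclideanLin_conjTranspose_eq_adjoint, projMat_toLin]
  have hs : (K.subtype ∘ₗ (K.orthogonalProjection).toLinearMap).IsSymmetric := by
    have := Submodule.starProjection_isSymmetric K
    exact this
  exact ((LinearMap.isSymmetric_iff_isSelfAdjoint _).mp hs)

lemma projMat_compl {n : ℕ} (K : Submodule ℂ (EuclideanSpace ℂ (Fin n))) :
    projMat Kᗮ = 1 - projMat K := by
  apply Matrix.toEuclideanLin.injective
  apply LinearMap.ext
  intro x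
  rw [map_sub, projMat_apply, ← Submodule.starProjection_apply,
    Submodule.starProjection_orthogonal_val, Submodule.starProjection_apply]
  rw [LinearMap.sub_apply, projMat_apply]
  congr 1
  simp [Matrix.toEuclideanLin_apply, Matrix.one_mulVec]

lemma trace_ct_mul_self_zero {n : ℕ} {M : Mat n} (h : (Mᴴ * M).trace = 0) : M = 0 := by
  have h' : ∑ i, ∑ j, star (M j i) * M j i = 0 := by
    simpa [Matrix.trace, Matrix.diag, Matrix.mul_apply, Matrix.conjTranspose_apply] using h
  ext i j
  have hinner : ∀ k, ∑ l, star (M l k) * M l k = 0 := by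
    intro k
    refine (Finset.sum_eq_zero_iff_of_nonneg ?_).mp h' k (Finset.mem_univ k)
    intro a _
    exact Finset.sum_nonneg fun b _ => star_mul_self_nonneg _
  have := (Finset.sum_eq_zero_iff_of_nonneg
      (fun b _ => star_mul_self_nonneg (M b j))).mp (hinner j) i (Finset.mem_univ i)
  rcases mul_eq_zero.mp this with h0 | h0
  · simpa using congrArg star h0
  · exact h0

open scoped MatrixOrder in
lemma psd_mul_eq_zero {n : ℕ} {A B : Mat n} (hA : A.PosSemidef) (hB : B.PosSemidef)
    (h : (A * B).trace = 0) : A * B = 0 := by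
  have hAh : (CFC.sqrt A)ᴴ = CFC.sqrt A := (CFC.sqrt_nonneg A).posSemidef.1
  have hBh : (CFC.sqrt B)ᴴ = CFC.sqrt B := (CFC.sqrt_nonneg B).posSemidef.1
  have key : ((CFC.sqrt B * CFC.sqrt A)ᴴ * (CFC.sqrt B * CFC.sqrt A)).trace = 0 := by
    rw [conjTranspose_mul, hAh, hBh]
    calc (CFC.sqrt A * CFC.sqrt B * (CFC.sqrt B * CFC.sqrt A)).trace
        = (CFC.sqrt A * (CFC.sqrt B * CFC.sqrt B) * CFC.sqrt A).trace := by simp only [Matrix.mul_assoc]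
      _ = (CFC.sqrt A * B * CFC.sqrt A).trace := by rw [CFC.sqrt_mul_sqrt_self B (Matrix.nonneg_iff_posSemidef.mpr hB)]
      _ = (CFC.sqrt A * CFC.sqrt A * B).trace := by rw [Matrix.trace_mul_comm, ← Matrix.mul_assoc]
      _ = (A * B).trace := by rw [CFC.sqrt_mul_sqrt_self A (Matrix.nonneg_iff_posSemidef.mpr hA)]
      _ = 0 := h
  have hz : CFC.sqrt B * CFC.sqrt A = 0 := trace_ct_mul_self_zero key
  have hBA : B * A = 0 := by
    calc B * A = CFC.sqrt B * (CFC.sqrt B * CFC.sqrt A) * CFC.sqrt A := by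
          conv_lhs => rw [← CFC.sqrt_mul_sqrt_self B (Matrix.nonneg_iff_posSemidef.mpr hB), ← CFC.sqrt_mul_sqrt_self A (Matrix.nonneg_iff_posSemidef.mpr hA)]
          simp only [Matrix.mul_assoc]
      _ = 0 := by rw [hz, Matrix.mul_zero, Matrix.zero_mul]
  calc A * B = (Bᴴ * Aᴴ)ᴴ := by rw [← conjTranspose_mul, conjTranspose_conjTranspose]
    _ = (B * A)ᴴ := by rw [hB.1, hA.1]
    _ = 0 := by rw [hBA, conjTranspose_zero]

/-- If `A * B = 0` and the range of `projMat K` lands in the support of `B`'s range side... :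
if `A` kills the range of `C`, and `K ≤ range C`, then `A * projMat K = 0`. -/
lemma mul_projMat_eq_zero {n : ℕ} {A C : Mat n} {K : Submodule ℂ (EuclideanSpace ℂ (Fin n))}
    (hK : K ≤ MatSupport C) (hAC : A * C = 0) : A * projMat K = 0 := by
  apply Matrix.toEuclideanLin.injective
  rw [euclid_mul]
  apply LinearMap.ext
  intro x
  simp only [LinearMap.comp_apply, projMat_apply, map_zero, LinearMap.zero_apply]
  obtain ⟨y, hy⟩ := hK (SetLike.coe_mem (K.orthogonalProjection x))
  rw [← hy]
  have := congrArg Matrix.toEuclideanLin hAC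
  rw [euclid_mul] at this
  have h2 := congrArg (fun f => f y) this
  simpa using h2

/-- The failure probability of any USD POVM for `(ρ1, ρ2)` decomposes as
`Q = (1 − N1) p1 + (1 − N2) p2 + N·Q'`, where `Q'` is the failure probability of the
compressed POVM element `F'? = P' Fq P'` for the reduced problem `(ρ1', ρ2')` with
a priori probabilities `p1', p2'`. -/
theorem usd_failure_decomposition {n : ℕ} (ρ1 ρ2 : Mat n)
    (h1 : IsDensity ρ1) (h2 : IsDensity ρ2)
    (p1 p2 : ℝ) (hp1 : 0 ≤ p1) (hp2 : 0 ≤ p2) (hp : p1 + p2 = 1)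
    (P' : Mat n) (hP' : P' = projMat ((MatSupport ρ1 ⊓ MatSupport ρ2)ᗮ))
    (N1 N2 : ℝ) (hN1 : N1 = ((ρ1 * P').trace).re) (hN2 : N2 = ((ρ2 * P').trace).re)
    (hN1pos : 0 < N1) (hN2pos : 0 < N2)
    (ρ1' ρ2' : Mat n)
    (hρ1' : ρ1' = ((N1 : ℂ))⁻¹ • (P' * ρ1 * P'))
    (hρ2' : ρ2' = ((N2 : ℂ))⁻¹ • (P' * ρ2 * P'))
    (N : ℝ) (hN : N = N1 * p1 + N2 * p2)
    (p1' p2' : ℝ) (hp1' : p1' = N1 * p1 / N) (hp2' : p2' = N2 * p2 / N)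
    (F1 F2 Fq : Mat n) (hUSD : IsUSD ρ1 ρ2 F1 F2 Fq) :
    failQ p1 p2 ρ1 ρ2 Fq =
      (1 - N1) * p1 + (1 - N2) * p2 + N * failQ p1' p2' ρ1' ρ2' (P' * Fq * P') := by
  obtain ⟨hF1, hF2, hFq, hsum, htr12, htr21⟩ := hUSD
  set K := MatSupport ρ1 ⊓ MatSupport ρ2 with hK
  -- products vanish
  have hρ1F2 : ρ1 * F2 = 0 := psd_mul_eq_zero h1.1 hF2 htr12
  have hρ2F1 : ρ2 * F1 = 0 := psd_mul_eq_zero h2.1 hF1 htr21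
  have hF2ρ1 : F2 * ρ1 = 0 := by
    have := congrArg conjTranspose hρ1F2
    rwa [conjTranspose_mul, h1.1.1, hF2.1, conjTranspose_zero] at this
  have hF1ρ2 : F1 * ρ2 = 0 := by
    have := congrArg conjTranspose hρ2F1
    rwa [conjTranspose_mul, h2.1.1, hF1.1, conjTranspose_zero] at this
  -- F_i kill the intersection projection
  have hF1Pi : F1 * projMat K = 0 := mul_projMat_eq_zero inf_le_right hF1ρ2
  have hF2Pi : F2 * projMat K = 0 := mul_projMat_eq_zero inf_le_left hF2ρ1
  have hPiF1 : projMat K * F1 = 0 := by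
    have := congrArg conjTranspose hF1Pi
    rwa [conjTranspose_mul, projMat_herm, hF1.1, conjTranspose_zero] at this
  have hPiF2 : projMat K * F2 = 0 := by
    have := congrArg conjTranspose hF2Pi
    rwa [conjTranspose_mul, projMat_herm, hF2.1, conjTranspose_zero] at this
  have hP'c : P' = 1 - projMat K := by rw [hP', projMat_compl]
  have hP'sq : P' * P' = P' := by rw [hP']; exact projMat_sq _
  have key1 : P' * F1 * P' = F1 := by
    rw [hP'c, sub_mul, one_mul, hPiF1, sub_zero, mul_sub, mul_one, hF1Pi, sub_zero]
  have key2 : P' * F2 * P' = F2 := by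
    rw [hP'c, sub_mul, one_mul, hPiF2, sub_zero, mul_sub, mul_one, hF2Pi, sub_zero]
  have hFqe : Fq = 1 - F1 - F2 := by rw [← hsum]; abel
  have keyq : P' * Fq * P' = P' - F1 - F2 := by
    rw [hFqe]
    have : P' * (1 - F1 - F2) * P' = P' * P' - P' * F1 * P' - P' * F2 * P' := by
      noncomm_ring
    rw [this, hP'sq, key1, key2]
  -- P' (P' - F1 - F2) P' = P' - F1 - F2
  have keyq2 : P' * (P' - F1 - F2) * P' = P' - F1 - F2 := by
    have : P' * (P' - F1 - F2) * P' = P' * P' * P' - P' * F1 * P' - P' * F2 * P' := by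
      noncomm_ring
    rw [this, hP'sq, hP'sq, key1, key2]
  -- trace identities over ℂ
  have trρ1Fq : (ρ1 * Fq).trace = 1 - (ρ1 * F1).trace := by
    rw [hFqe]
    have : ρ1 * (1 - F1 - F2) = ρ1 - ρ1 * F1 - ρ1 * F2 := by noncomm_ring
    rw [this, trace_sub, trace_sub, hρ1F2, trace_zero, sub_zero, h1.2]
  have trρ2Fq : (ρ2 * Fq).trace = 1 - (ρ2 * F2).trace := by
    rw [hFqe]
    have : ρ2 * (1 - F1 - F2) = ρ2 - ρ2 * F1 - ρ2 * F2 := by noncomm_ring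
    rw [this, trace_sub, trace_sub, hρ2F1, trace_zero, sub_zero, h2.2]
  have tr1' : (ρ1 * (P' * Fq * P')).trace = (ρ1 * P').trace - (ρ1 * F1).trace := by
    rw [keyq]
    have : ρ1 * (P' - F1 - F2) = ρ1 * P' - ρ1 * F1 - ρ1 * F2 := by noncomm_ring
    rw [this, trace_sub, trace_sub, hρ1F2, trace_zero, sub_zero]
  have tr2' : (ρ2 * (P' * Fq * P')).trace = (ρ2 * P').trace - (ρ2 * F2).trace := by
    rw [keyq]
    have : ρ2 * (P' - F1 - F2) = ρ2 * P' - ρ2 * F1 - ρ2 * F2 := by noncomm_ring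
    rw [this, trace_sub, trace_sub, hρ2F1, trace_zero, sub_zero]
  -- reduced traces
  have tr1'' : (ρ1' * (P' * Fq * P')).trace
      = (N1 : ℂ)⁻¹ * ((ρ1 * P').trace - (ρ1 * F1).trace) := by
    rw [hρ1', keyq, smul_mul_assoc, trace_smul, smul_eq_mul]
    congr 1
    calc (P' * ρ1 * P' * (P' - F1 - F2)).trace
        = (ρ1 * (P' * (P' - F1 - F2) * P')).trace := by
          conv_lhs => rw [Matrix.mul_assoc, Matrix.mul_assoc, Matrix.trace_mul_comm]
          simp only [Matrix.mul_assoc]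
      _ = (ρ1 * (P' - F1 - F2)).trace := by rw [keyq2]
      _ = (ρ1 * P').trace - (ρ1 * F1).trace := by
          have : ρ1 * (P' - F1 - F2) = ρ1 * P' - ρ1 * F1 - ρ1 * F2 := by noncomm_ring
          rw [this, trace_sub, trace_sub, hρ1F2, trace_zero, sub_zero]
  have tr2'' : (ρ2' * (P' * Fq * P')).trace
      = (N2 : ℂ)⁻¹ * ((ρ2 * P').trace - (ρ2 * F2).trace) := by
    rw [hρ2', keyq, smul_mul_assoc, trace_smul, smul_eq_mul]
    congr 1
    calc (P' * ρ2 * P' * (P' - F1 - F2)).trace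
        = (ρ2 * (P' * (P' - F1 - F2) * P')).trace := by
          conv_lhs => rw [Matrix.mul_assoc, Matrix.mul_assoc, Matrix.trace_mul_comm]
          simp only [Matrix.mul_assoc]
      _ = (ρ2 * (P' - F1 - F2)).trace := by rw [keyq2]
      _ = (ρ2 * P').trace - (ρ2 * F2).trace := by
          have : ρ2 * (P' - F1 - F2) = ρ2 * P' - ρ2 * F1 - ρ2 * F2 := by noncomm_ring
          rw [this, trace_sub, trace_sub, hρ2F1, trace_zero, sub_zero]
  -- positivity of N
  have hNpos : 0 < N := by
    rcases eq_or_lt_of_le hp1 with h | h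
    · have hp2' : p2 = 1 := by linarith
      rw [hN, ← h, hp2']; simpa using hN2pos
    · have : 0 < N1 * p1 := mul_pos hN1pos h
      have : 0 ≤ N2 * p2 := mul_nonneg hN2pos.le hp2
      rw [hN]; linarith
  have hNne : N ≠ 0 := ne_of_gt hNpos
  have hN1ne : N1 ≠ 0 := ne_of_gt hN1pos
  have hN2ne : N2 ≠ 0 := ne_of_gt hN2pos
  -- take real parts
  set a1 := ((ρ1 * F1).trace).re with ha1
  set a2 := ((ρ2 * F2).trace).re with ha2
  have e1 : ((ρ1 * Fq).trace).re = 1 - a1 := by rw [trρ1Fq, Complex.sub_re, Complex.one_re]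
  have e2 : ((ρ2 * Fq).trace).re = 1 - a2 := by rw [trρ2Fq, Complex.sub_re, Complex.one_re]
  have e1' : ((ρ1' * (P' * Fq * P')).trace).re = N1⁻¹ * (N1 - a1) := by
    rw [tr1'', ← Complex.ofReal_inv, Complex.re_ofReal_mul, Complex.sub_re, hN1]
  have e2' : ((ρ2' * (P' * Fq * P')).trace).re = N2⁻¹ * (N2 - a2) := by
    rw [tr2'', ← Complex.ofReal_inv, Complex.re_ofReal_mul, Complex.sub_re, hN2]
  rw [failQ, failQ, e1, e2, e1', e2', hp1', hp2']
  field_simp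
  ring
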